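/- Let I ⊆ E(V) be a homogeneous ideal generated in degrees ≥ 2 and J = π^{-1}(I). Then J has a finite Gröbner basis with respect to ≺_t. -/

import Mathlib

open scoped BigOperators

/-- Words in the letters `X_1, …, X_n`: the free monoid on `Fin n`. -/
abbrev Word (n : ℕ) := FreeMonoid (Fin n)

/-- The free associative algebra `K⟨X_1,…,X_n⟩`, as the monoid algebra of the free monoid. -/
abbrev FA (K : Type) [Field K] (n : ℕ) := MonoidAlgebra K (Word n)

/-- The word `w`, viewed as an element of `K⟨X_1,…,X_n⟩`. -/
noncomputable def ofW (K : Type) [Field K] {n : ℕ} (w : Word n) : FA K n :=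
  MonoidAlgebra.of K (Word n) w

/-- The variable `X_i`. -/
noncomputable def Xv (K : Type) [Field K] {n : ℕ} (i : Fin n) : FA K n :=
  ofW K (FreeMonoid.of i)

/-- The set of anti-commutators `X_iX_j + X_jX_i`, `i ≤ j`. -/
def antiCommSet (K : Type) [Field K] (n : ℕ) : Set (FA K n) :=
  { f | ∃ i j : Fin n, i ≤ j ∧ f = Xv K i * Xv K j + Xv K j * Xv K i }

/-- The anti-commutator ideal `C`. -/
noncomputable def antiCommIdeal (K : Type) [Field K] (n : ℕ) : TwoSidedIdeal (FA K n) :=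
  TwoSidedIdeal.span (antiCommSet K n)

/-- The exterior algebra `E(V)` as the quotient of `K⟨X_1,…,X_n⟩` by `C`. -/
abbrev EV (K : Type) [Field K] (n : ℕ) := (antiCommIdeal K n).ringCon.Quotient

/-- The quotient map `π : K⟨X_1,…,X_n⟩ → E(V)`. -/
noncomputable def piE (K : Type) [Field K] (n : ℕ) : FA K n →+* EV K n :=
  RingCon.mk' _

noncomputable instance (K : Type) [Field K] (n : ℕ) : Module K (EV K n) :=
  { (inferInstance : DistribMulAction K (EV K n)) with
    add_smul := fun a b f => by
      obtain ⟨x, rfl⟩ := Quotient.mk''_surjective f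
      show (((a + b) • x : FA K n) : EV K n) = ((a • x : FA K n) : EV K n) + ((b • x : FA K n) : EV K n)
      rw [← RingCon.coe_add, add_smul]
    zero_smul := fun f => by
      obtain ⟨x, rfl⟩ := Quotient.mk''_surjective f
      show (((0 : K) • x : FA K n) : EV K n) = ((0 : FA K n) : EV K n)
      rw [zero_smul] }

/-- The sorted word associated to a finite set of indices. -/
def wordOf {n : ℕ} (A : Finset (Fin n)) : Word n :=
  FreeMonoid.ofList (A.sort (· ≤ ·))

/-- The square-free monomial `x_A ∈ E(V)`. -/
noncomputable def xF (K : Type) [Field K] {n : ℕ} (A : Finset (Fin n)) : EV K n :=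
  piE K n (ofW K (wordOf A))

/-- A monoid well-order on the free commutative monoid on `x_1,…,x_n`
(identified additively with `Fin n →₀ ℕ`): a total, well-founded, translation
invariant strict order. -/
structure IsCommMonoidWellOrder (n : ℕ) (r : (Fin n →₀ ℕ) → (Fin n →₀ ℕ) → Prop) : Prop where
  trans : Transitive r
  irrefl : ∀ a, ¬ r a a
  total : ∀ a b, r a b ∨ a = b ∨ r b a
  wf : WellFounded r
  mul_compat : ∀ a b c, r a b → r (a + c) (b + c)

/-- A monoid well-order on the free monoid `⟨X_1,…,X_n⟩`. -/
structure IsMonoidWellOrder (n : ℕ) (r : Word n → Word n → Prop) : Prop where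
  trans : Transitive r
  irrefl : ∀ a, ¬ r a a
  total : ∀ a b, r a b ∨ a = b ∨ r b a
  wf : WellFounded r
  mul_compat : ∀ a b p q, r a b → r (p * a * q) (p * b * q)

/-- A finite set of indices, viewed as a square-free element of the free
commutative monoid. -/
noncomputable def sqMon {n : ℕ} (A : Finset (Fin n)) : Fin n →₀ ℕ :=
  Multiset.toFinsupp (A.val)

/-- The restriction `≺_e` of the order `≺_s` (given by `es`) to square-free monomials,
identified with finite subsets of `{1,…,n}`. -/
def precE {n : ℕ} (es : (Fin n →₀ ℕ) → (Fin n →₀ ℕ) → Prop)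
    (A B : Finset (Fin n)) : Prop :=
  es (sqMon A) (sqMon B)

/-- The degree-lexicographic order on words, with `X_1 < X_2 < ⋯ < X_n`. -/
def degLex {n : ℕ} (M N : Word n) : Prop :=
  (FreeMonoid.toList M).length < (FreeMonoid.toList N).length ∨
    ((FreeMonoid.toList M).length = (FreeMonoid.toList N).length ∧
      List.Lex (· < ·) (FreeMonoid.toList M) (FreeMonoid.toList N))

/-- The set of letters of a word. -/
def lettersOf {n : ℕ} (M : Word n) : Finset (Fin n) :=
  (FreeMonoid.toList M).toFinset

/-- A word is square-free iff no letter is repeated; equivalently `π(M) ≠ 0` in `E(V)`. -/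
def SqFreeWord {n : ℕ} (M : Word n) : Prop :=
  (FreeMonoid.toList M).Nodup

/-- The order `≺_t` on words: square-free words are compared first by the `≺_e`-order on
their underlying square-free commutative monomials, ties broken degree-lexicographically;
words mapping to `0` in the exterior algebra are compared degree-lexicographically. -/
def precT {n : ℕ} (es : (Fin n →₀ ℕ) → (Fin n →₀ ℕ) → Prop) (M N : Word n) : Prop :=
  (SqFreeWord M ∧ SqFreeWord N ∧
    (precE es (lettersOf M) (lettersOf N) ∨ (lettersOf M = lettersOf N ∧ degLex M N)))
  ∨ ((¬ SqFreeWord M ∨ ¬ SqFreeWord N) ∧ degLex M N)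

/-- `m` is the `r`-largest word occurring in `f` with nonzero coefficient. -/
def IsLeadWord {K : Type} [Field K] {n : ℕ} (r : Word n → Word n → Prop)
    (f : FA K n) (m : Word n) : Prop :=
  m ∈ f.coeff.support ∧ ∀ m' ∈ f.coeff.support, m' ≠ m → r m' m

/-- The initial ideal `in_r(J)` of a two-sided ideal `J ⊆ K⟨X_1,…,X_n⟩`: the two-sided
ideal generated by the leading words of the nonzero elements of `J`. -/
noncomputable def inIdeal {K : Type} [Field K] {n : ℕ} (r : Word n → Word n → Prop)
    (J : TwoSidedIdeal (FA K n)) : TwoSidedIdeal (FA K n) :=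
  TwoSidedIdeal.span { g | ∃ f m, f ∈ J ∧ f ≠ 0 ∧ IsLeadWord r f m ∧ g = ofW K m }

/-- `G` is a Gröbner basis of `J` w.r.t. `r`: `G` consists of nonzero elements of `J`
whose leading words generate `in_r(J)`. -/
def IsGB {K : Type} [Field K] {n : ℕ} (r : Word n → Word n → Prop)
    (J : TwoSidedIdeal (FA K n)) (G : Set (FA K n)) : Prop :=
  (∀ g ∈ G, g ∈ J ∧ g ≠ 0) ∧
  TwoSidedIdeal.span { h | ∃ g ∈ G, ∃ m, IsLeadWord r g m ∧ h = ofW K m } = inIdeal r J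

/-- `G` is a minimal Gröbner basis: no leading word of an element of `G` is a subword
(factor) of the leading word of another element. -/
def IsMinGB {K : Type} [Field K] {n : ℕ} (r : Word n → Word n → Prop)
    (J : TwoSidedIdeal (FA K n)) (G : Set (FA K n)) : Prop :=
  IsGB r J G ∧
  ∀ g ∈ G, ∀ g' ∈ G, g ≠ g' → ∀ m m', IsLeadWord r g m → IsLeadWord r g' m' →
    ¬ (FreeMonoid.toList m <:+: FreeMonoid.toList m')

/-- An element of `K⟨X_1,…,X_n⟩` is homogeneous of degree `d`. -/
def IsHomogOfDeg {K : Type} [Field K] {n : ℕ} (f : FA K n) (d : ℕ) : Prop :=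
  ∀ w ∈ f.coeff.support, (FreeMonoid.toList w).length = d

/-- `L ⊆ E(V)` is a monomial ideal: it is generated by square-free monomials. -/
def IsMonomialIdealE {K : Type} [Field K] {n : ℕ} (L : TwoSidedIdeal (EV K n)) : Prop :=
  ∃ S : Set (Finset (Fin n)), L = TwoSidedIdeal.span (xF K '' S)

/-- The set `U_L(m)` for `m = x_A`: square-free monomials `u` in the variables strictly
between `min A` and `max A` such that `u·(m/x_{min A}) ∉ L` and `u·(m/x_{max A}) ∉ L`. -/
noncomputable def UL {K : Type} [Field K] {n : ℕ} (L : TwoSidedIdeal (EV K n))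
    (A : Finset (Fin n)) : Set (Finset (Fin n)) :=
  { u | ∃ hA : A.Nonempty,
      (∀ i ∈ u, A.min' hA < i ∧ i < A.max' hA) ∧
      xF K u * xF K (A.erase (A.min' hA)) ∉ L ∧
      xF K u * xF K (A.erase (A.max' hA)) ∉ L }

/-- `x_A` is a minimal (monomial) generator of the monomial ideal `L`. -/
def IsMinGenE {K : Type} [Field K] {n : ℕ} (L : TwoSidedIdeal (EV K n))
    (A : Finset (Fin n)) : Prop :=
  xF K A ∈ L ∧ ∀ B ⊆ A, B ≠ A → xF K B ∉ L

/-- `L` is squeezed: `U_L(m) = {1}` for every minimal generator `m` of `L`. -/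
def IsSqueezed {K : Type} [Field K] {n : ℕ} (L : TwoSidedIdeal (EV K n)) : Prop :=
  ∀ A : Finset (Fin n), IsMinGenE L A → UL L A = {∅}

/-- `L` is stable: if `m ∈ L` and `x_j` is the largest variable dividing `m`,
then `x_i·(m/x_j) ∈ L` for all `i ≤ j`. -/
def IsStableE {K : Type} [Field K] {n : ℕ} (L : TwoSidedIdeal (EV K n)) : Prop :=
  ∀ A : Finset (Fin n), ∀ hA : A.Nonempty, xF K A ∈ L →
    ∀ i ≤ A.max' hA, xF K {i} * xF K (A.erase (A.max' hA)) ∈ L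

/-- `L` is strongly stable: if `m ∈ L` and `x_j` divides `m`, then
`x_i·(m/x_j) ∈ L` for all `i ≤ j` with `x_i·(m/x_j) ≠ 0`. -/
def IsStronglyStableE {K : Type} [Field K] {n : ℕ} (L : TwoSidedIdeal (EV K n)) : Prop :=
  ∀ A : Finset (Fin n), xF K A ∈ L → ∀ j ∈ A, ∀ i ≤ j,
    xF K {i} * xF K (A.erase j) ≠ 0 → xF K {i} * xF K (A.erase j) ∈ L

/-- `δ` is the canonical `K`-linear section of `π`, sending `x_{i_1}⋯x_{i_r}` to
`X_{i_1}⋯X_{i_r}` for `i_1 < ⋯ < i_r`. -/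
def IsDeltaSection {K : Type} [Field K] {n : ℕ} (δ : EV K n →ₗ[K] FA K n) : Prop :=
  ∀ A : Finset (Fin n), δ (xF K A) = ofW K (wordOf A)

/-- `x_A` is the `≺_e`-leading monomial of `0 ≠ f ∈ E(V)`, computed via the canonical
representative `δ f`. -/
def IsLeadE {K : Type} [Field K] {n : ℕ} (es : (Fin n →₀ ℕ) → (Fin n →₀ ℕ) → Prop)
    (δ : EV K n →ₗ[K] FA K n) (f : EV K n) (A : Finset (Fin n)) : Prop :=
  wordOf A ∈ (δ f).coeff.support ∧
  ∀ w ∈ (δ f).coeff.support, w ≠ wordOf A → precE es (lettersOf w) A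

/-- The initial ideal `in_{≺_e}(I)` of an ideal `I ⊆ E(V)`. -/
noncomputable def inE {K : Type} [Field K] {n : ℕ}
    (es : (Fin n →₀ ℕ) → (Fin n →₀ ℕ) → Prop) (δ : EV K n →ₗ[K] FA K n)
    (I : TwoSidedIdeal (EV K n)) : TwoSidedIdeal (EV K n) :=
  TwoSidedIdeal.span { h | ∃ f A, f ∈ I ∧ f ≠ 0 ∧ IsLeadE es δ f A ∧ h = xF K A }

/-- `G` is a Gröbner basis of `I ⊆ E(V)` w.r.t. `≺_e`. -/
def IsGBE {K : Type} [Field K] {n : ℕ} (es : (Fin n →₀ ℕ) → (Fin n →₀ ℕ) → Prop)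
    (δ : EV K n →ₗ[K] FA K n) (I : TwoSidedIdeal (EV K n)) (G : Set (EV K n)) : Prop :=
  (∀ g ∈ G, g ∈ I ∧ g ≠ 0) ∧
  TwoSidedIdeal.span { h | ∃ g ∈ G, ∃ A, IsLeadE es δ g A ∧ h = xF K A } = inE es δ I

/-- `G` is a minimal Gröbner basis of `I ⊆ E(V)` w.r.t. `≺_e`: moreover no leading
monomial of an element of `G` divides the leading monomial of another element. -/
def IsMinGBE {K : Type} [Field K] {n : ℕ} (es : (Fin n →₀ ℕ) → (Fin n →₀ ℕ) → Prop)
    (δ : EV K n →ₗ[K] FA K n) (I : TwoSidedIdeal (EV K n)) (G : Set (EV K n)) : Prop :=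
  IsGBE es δ I G ∧
  ∀ g ∈ G, ∀ g' ∈ G, g ≠ g' → ∀ A A', IsLeadE es δ g A → IsLeadE es δ g' A' → ¬ A ⊆ A'

/-- `I ⊆ E(V)` is a homogeneous ideal generated in degrees `≥ 2`: it is generated by
images of homogeneous elements of degree `≥ 2`. -/
def IsHomogGenInDegGE2 {K : Type} [Field K] {n : ℕ} (I : TwoSidedIdeal (EV K n)) : Prop :=
  ∃ S : Set (FA K n), (∀ f ∈ S, ∃ d, 2 ≤ d ∧ IsHomogOfDeg f d) ∧
    I = TwoSidedIdeal.span (piE K n '' S)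

/-- The action of an `n × n` matrix `g` on `K⟨X_1,…,X_n⟩` by the algebra endomorphism
determined by `X_i ↦ Σ_ℓ g_{ℓi} X_ℓ`. -/
noncomputable def actFA (K : Type) [Field K] {n : ℕ} (g : Matrix (Fin n) (Fin n) K) :
    FA K n →ₐ[K] FA K n :=
  MonoidAlgebra.lift (R := K) (M := Word n) (A := FA K n)
    (FreeMonoid.lift fun i => ∑ l : Fin n, g l i • Xv K l)

/-- The degree-`d` homogeneous component of a two-sided ideal of `K⟨X_1,…,X_n⟩`,
as a `K`-subspace. -/
def degComp {K : Type} [Field K] {n : ℕ} (c : TwoSidedIdeal (FA K n)) (d : ℕ) :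
    Submodule K (FA K n) where
  carrier := {f | f ∈ c ∧ IsHomogOfDeg f d}
  add_mem' := fun {a b} ha hb => ⟨c.add_mem ha.1 hb.1, fun w hw => by
    classical
    rw [MonoidAlgebra.coeff_add] at hw
    rcases Finset.mem_union.1 (Finsupp.support_add hw) with h | h
    exacts [ha.2 w h, hb.2 w h]⟩
  zero_mem' := ⟨c.zero_mem, fun w hw => by simp at hw⟩
  smul_mem' := fun k f hf => ⟨by
      rw [Algebra.smul_def]
      exact c.mul_mem_left _ _ hf.1,
    fun w hw => hf.2 w (Finsupp.support_smul hw)⟩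

/-- A two-sided ideal of `K⟨X_1,…,X_n⟩` is homogeneous (for the grading by word length). -/
def IsHomogIdeal {K : Type} [Field K] {n : ℕ} (a : TwoSidedIdeal (FA K n)) : Prop :=
  ∀ f ∈ a, ∀ d : ℕ, MonoidAlgebra.ofCoeff (f.coeff.filter (fun w => (FreeMonoid.toList w).length = d)) ∈ a

/-- Evaluation of a polynomial in the matrix entries at an element of `GL_n(K)`. -/
noncomputable def evalGL {K : Type} [Field K] {n : ℕ}
    (p : MvPolynomial (Fin n × Fin n) K) (g : GL (Fin n) K) : K :=
  MvPolynomial.eval (fun q => (g : Matrix (Fin n) (Fin n) K) q.1 q.2) p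

/-- The image `g(a)` of a two-sided ideal under the action of a matrix `g`. -/
noncomputable def mapIdealFA (K : Type) [Field K] {n : ℕ} (g : Matrix (Fin n) (Fin n) K)
    (a : TwoSidedIdeal (FA K n)) : TwoSidedIdeal (FA K n) :=
  TwoSidedIdeal.span ((actFA K g) '' (a : Set (FA K n)))

/-- `b` is the generic initial ideal of `a` w.r.t. the order `r`: `b` is a monomial
ideal and there is a countable family of nonempty basic Zariski-open subsets of
`GL_n(K)` on whose (F_δ) intersection `in_r(g(a)) = b`. -/
def IsGin {K : Type} [Field K] {n : ℕ} (r : Word n → Word n → Prop)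
    (a b : TwoSidedIdeal (FA K n)) : Prop :=
  (∃ S : Set (Word n), b = TwoSidedIdeal.span (ofW K '' S)) ∧
  ∃ ps : ℕ → MvPolynomial (Fin n × Fin n) K,
    (∀ k, ∃ g : GL (Fin n) K, evalGL (ps k) g ≠ 0) ∧
    (∃ g : GL (Fin n) K, ∀ k, evalGL (ps k) g ≠ 0) ∧
    ∀ g : GL (Fin n) K, (∀ k, evalGL (ps k) g ≠ 0) →
      inIdeal r (mapIdealFA K (↑g) a) = b

/-- `bE` is the generic initial ideal of the ideal `I ⊆ E(V)` w.r.t. `≺_e`. -/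
def IsGinE {K : Type} [Field K] {n : ℕ} (es : (Fin n →₀ ℕ) → (Fin n →₀ ℕ) → Prop)
    (δ : EV K n →ₗ[K] FA K n) (I bE : TwoSidedIdeal (EV K n)) : Prop :=
  IsMonomialIdealE bE ∧
  ∃ ps : ℕ → MvPolynomial (Fin n × Fin n) K,
    (∀ k, ∃ g : GL (Fin n) K, evalGL (ps k) g ≠ 0) ∧
    (∃ g : GL (Fin n) K, ∀ k, evalGL (ps k) g ≠ 0) ∧
    ∀ g : GL (Fin n) K, (∀ k, evalGL (ps k) g ≠ 0) →
      ∀ gE : EV K n ≃+* EV K n, (∀ x, gE (piE K n x) = piE K n (actFA K (↑g) x)) →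
        inE es δ (TwoSidedIdeal.span (⇑gE '' (I : Set (EV K n)))) = bE

/-! The ideal `J = π⁻¹(I)` contains every anti-commutator `X_bX_a + X_aX_b`, whose `≺_t`-leading
word is `X_aX_b` for `b ≤ a` (for `b = a` because `2 ≠ 0`). A word avoiding all factors `X_aX_b`
with `b ≤ a` has strictly increasing letters, so it is one of the finitely many words `wordOf A`.
Hence the anti-commutators together with one element of `J` with leading word `wordOf A`, for each
`A` for which such an element exists, form a finite Gröbner basis. -/

lemma List.isChain_lt_or_exists_adjacent_ge {α : Type*} [LinearOrder α] :
    ∀ l : List α, l.IsChain (· < ·) ∨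
      ∃ (p : List α) (a b : α) (q : List α), l = p ++ a :: b :: q ∧ b ≤ a
  | [] => Or.inl List.isChain_nil
  | [_] => Or.inl (List.isChain_singleton _)
  | a :: b :: t => by
    rcases le_or_gt b a with hba | hab
    · exact Or.inr ⟨[], a, b, t, rfl, hba⟩
    · rcases isChain_lt_or_exists_adjacent_ge (b :: t) with hc | ⟨p, x, y, q, heq, hyx⟩
      · exact Or.inl (List.isChain_cons_cons.2 ⟨hab, hc⟩)
      · exact Or.inr ⟨a :: p, x, y, q, by rw [heq]; rfl, hyx⟩

section Words

variable {n : ℕ}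

lemma wordOf_lettersOf_of_pairwise_lt {m : Word n}
    (hm : (FreeMonoid.toList m).Pairwise (· < ·)) : wordOf (lettersOf m) = m := by
  have hsort : (lettersOf m).sort (· ≤ ·) = FreeMonoid.toList m :=
    (List.toFinset_sort _ (hm.imp ne_of_lt)).2 (hm.imp le_of_lt)
  rw [wordOf, hsort, FreeMonoid.ofList_toList]

lemma eq_wordOf_lettersOf_or_exists_descent (m : Word n) :
    wordOf (lettersOf m) = m ∨ ∃ (p q : Word n) (a b : Fin n), b ≤ a ∧
      m = p * (FreeMonoid.of a * FreeMonoid.of b) * q := by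
  rcases List.isChain_lt_or_exists_adjacent_ge (FreeMonoid.toList m) with hc | ⟨p, a, b, q, hm, hba⟩
  · exact Or.inl (wordOf_lettersOf_of_pairwise_lt (List.isChain_iff_pairwise.1 hc))
  · refine Or.inr ⟨FreeMonoid.ofList p, FreeMonoid.ofList q, a, b, hba, ?_⟩
    apply FreeMonoid.toList.injective
    simp [hm]

lemma precT_of_mul_of_of_lt (es : (Fin n →₀ ℕ) → (Fin n →₀ ℕ) → Prop) {a b : Fin n} (h : b < a) :
    precT es (FreeMonoid.of b * FreeMonoid.of a) (FreeMonoid.of a * FreeMonoid.of b) := by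
  refine Or.inl ⟨?_, ?_, Or.inr ⟨?_, Or.inr ⟨rfl, List.Lex.rel h⟩⟩⟩
  · show [b, a].Nodup
    simp [h.ne]
  · show [a, b].Nodup
    simp [h.ne']
  · show [b, a].toFinset = [a, b].toFinset
    simp [Finset.pair_comm]

end Words

section GroebnerBasis

variable {K : Type} [Field K] {n : ℕ} {r : Word n → Word n → Prop}

lemma ofW_mul (u v : Word n) : ofW K (u * v) = ofW K u * ofW K v :=
  map_mul (MonoidAlgebra.of K (Word n)) u v

lemma IsLeadWord.ne_zero {f : FA K n} {m : Word n} (h : IsLeadWord r f m) : f ≠ 0 := by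
  rintro rfl
  simpa using h.1

lemma isGB_of_forall_isLeadWord_factor {J : TwoSidedIdeal (FA K n)} {G : Set (FA K n)}
    (hG : ∀ g ∈ G, g ∈ J ∧ g ≠ 0)
    (hlead : ∀ f ∈ J, f ≠ 0 → ∀ m, IsLeadWord r f m →
      ∃ g ∈ G, ∃ m₀, IsLeadWord r g m₀ ∧ ∃ p q, m = p * m₀ * q) :
    IsGB r J G := by
  refine ⟨hG, le_antisymm ?_ ?_⟩
  · refine TwoSidedIdeal.span_le.2 ?_
    rintro _ ⟨g, hg, m, hm, rfl⟩
    exact TwoSidedIdeal.subset_span ⟨g, m, (hG g hg).1, (hG g hg).2, hm, rfl⟩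
  · refine TwoSidedIdeal.span_le.2 ?_
    rintro _ ⟨f, m, hfJ, hf, hm, rfl⟩
    obtain ⟨g, hg, m₀, hm₀, p, q, rfl⟩ := hlead f hfJ hf m hm
    have hgen : ofW K m₀ ∈ TwoSidedIdeal.span
        {h | ∃ g ∈ G, ∃ m, IsLeadWord r g m ∧ h = ofW K m} :=
      TwoSidedIdeal.subset_span ⟨g, hg, m₀, hm₀, rfl⟩
    rw [ofW_mul, ofW_mul]
    exact TwoSidedIdeal.mul_mem_right _ _ _ (TwoSidedIdeal.mul_mem_left _ _ _ hgen)

/-- The basis is `G₀` together with one chosen element of `J` for each word of `W` that occurs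
as a leading word. -/
lemma exists_finite_isGB_of_isLeadWord_cover (J : TwoSidedIdeal (FA K n)) (G₀ : Finset (FA K n))
    (hG₀ : ∀ g ∈ G₀, g ∈ J ∧ g ≠ 0) (W : Finset (Word n))
    (hcover : ∀ f ∈ J, f ≠ 0 → ∀ m, IsLeadWord r f m →
      m ∈ W ∨ ∃ g ∈ G₀, ∃ m₀, IsLeadWord r g m₀ ∧ ∃ p q, m = p * m₀ * q) :
    ∃ G : Finset (FA K n), IsGB r J G := by
  classical
  let P : Word n → Prop := fun w => ∃ f, f ∈ J ∧ f ≠ 0 ∧ IsLeadWord r f w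
  let F : Word n → FA K n := fun w => if h : P w then h.choose else 0
  have hF : ∀ w, P w → F w ∈ J ∧ F w ≠ 0 ∧ IsLeadWord r (F w) w := fun w hw => by
    simpa only [F, dif_pos hw] using hw.choose_spec
  refine ⟨G₀ ∪ (W.filter P).image F, isGB_of_forall_isLeadWord_factor ?_ ?_⟩
  · intro g hg
    rcases Finset.mem_union.1 hg with hg | hg
    · exact hG₀ g hg
    · obtain ⟨w, hw, rfl⟩ := Finset.mem_image.1 hg
      exact (hF w (Finset.mem_filter.1 hw).2).imp_right And.left
  · intro f hfJ hf m hm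
    rcases hcover f hfJ hf m hm with hmW | ⟨g, hg, hg'⟩
    · have hPm : P m := ⟨f, hfJ, hf, hm⟩
      refine ⟨F m, Finset.mem_union_right _ (Finset.mem_image_of_mem F ?_), m, (hF m hPm).2.2,
        1, 1, by simp⟩
      exact Finset.mem_filter.2 ⟨hmW, hPm⟩
    · exact ⟨g, Finset.mem_union_left _ hg, hg'⟩

end GroebnerBasis

noncomputable def antiComm (K : Type) [Field K] {n : ℕ} (b a : Fin n) : FA K n :=
  Xv K b * Xv K a + Xv K a * Xv K b

section AntiCommutator

variable {K : Type} [Field K] {n : ℕ}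

lemma piE_antiComm (b a : Fin n) : piE K n (antiComm K b a) = 0 := by
  have hmem : antiComm K (min b a) (max b a) ∈ antiCommIdeal K n :=
    TwoSidedIdeal.subset_span ⟨_, _, min_le_max, rfl⟩
  have hsymm : antiComm K (min b a) (max b a) = antiComm K b a := by
    rcases le_total b a with h | h
    · simp [h]
    · simp [antiComm, h, add_comm]
  rw [← hsymm, ← map_zero (piE K n)]
  exact (RingCon.eq _).2 hmem

lemma Xv_mul_Xv (b a : Fin n) :
    Xv K b * Xv K a = MonoidAlgebra.single (FreeMonoid.of b * FreeMonoid.of a) (1 : K) :=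
  (ofW_mul _ _).symm

lemma isLeadWord_precT_antiComm (hchar : (2 : K) ≠ 0)
    (es : (Fin n →₀ ℕ) → (Fin n →₀ ℕ) → Prop) {b a : Fin n} (h : b ≤ a) :
    IsLeadWord (precT es) (antiComm K b a) (FreeMonoid.of a * FreeMonoid.of b) := by
  classical
  rcases eq_or_lt_of_le h with rfl | hlt
  · have hsq : antiComm K b b = MonoidAlgebra.single (FreeMonoid.of b * FreeMonoid.of b) (2 : K) := by
      rw [antiComm, Xv_mul_Xv, ← MonoidAlgebra.single_add, one_add_one_eq_two]
    rw [hsq]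
    refine ⟨by simpa using hchar, fun m' hm' hne => absurd ?_ hne⟩
    simpa [Finsupp.support_single _ hchar] using hm'
  · have hne : FreeMonoid.of b * FreeMonoid.of a ≠ FreeMonoid.of a * FreeMonoid.of b := by
      intro heq
      have := congrArg FreeMonoid.toList heq
      simp only [FreeMonoid.toList_mul, FreeMonoid.toList_of, List.singleton_append,
        List.cons.injEq] at this
      exact hlt.ne this.1
    have hsupp : (antiComm K b a).coeff.support =
        {FreeMonoid.of b * FreeMonoid.of a, FreeMonoid.of a * FreeMonoid.of b} := by
      rw [antiComm, Xv_mul_Xv, Xv_mul_Xv, MonoidAlgebra.coeff_add, MonoidAlgebra.coeff_single,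
        MonoidAlgebra.coeff_single, Finsupp.support_add_eq, Finsupp.support_single _ one_ne_zero,
        Finsupp.support_single _ one_ne_zero, Finset.insert_eq]
      simpa using hne
    refine ⟨by simp [hsupp], fun m' hm' hne' => ?_⟩
    rw [hsupp] at hm'
    rcases Finset.mem_insert.1 hm' with rfl | hm'
    · exact precT_of_mul_of_of_lt es hlt
    · exact absurd (Finset.mem_singleton.1 hm') hne'

end AntiCommutator

theorem preimage_has_finite_GB_general (K : Type) [Field K] (hchar : (2 : K) ≠ 0)
    (n : ℕ)
    (es : (Fin n →₀ ℕ) → (Fin n →₀ ℕ) → Prop)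
    (I : TwoSidedIdeal (EV K n))
    (J : TwoSidedIdeal (FA K n)) (hJ : ∀ x, x ∈ J ↔ piE K n x ∈ I) :
    ∃ G : Finset (FA K n), IsGB (precT es) J (↑G : Set (FA K n)) := by
  classical
  let G₀ := (Finset.univ.filter fun p : Fin n × Fin n => p.1 ≤ p.2).image
    fun p => antiComm K p.1 p.2
  refine exists_finite_isGB_of_isLeadWord_cover J G₀ ?_ (Finset.univ.image wordOf) ?_
  · intro g hg
    obtain ⟨⟨b, a⟩, hba, rfl⟩ := Finset.mem_image.1 hg
    refine ⟨(hJ _).2 ?_, (isLeadWord_precT_antiComm hchar es (Finset.mem_filter.1 hba).2).ne_zero⟩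
    rw [piE_antiComm]
    exact I.zero_mem
  · intro f _ _ m _
    rcases eq_wordOf_lettersOf_or_exists_descent m with hm | ⟨p, q, a, b, hba, rfl⟩
    · exact Or.inl (Finset.mem_image.2 ⟨lettersOf m, Finset.mem_univ _, hm⟩)
    · refine Or.inr ⟨antiComm K b a, Finset.mem_image.2 ⟨(b, a), by simpa using hba, rfl⟩, _,
        isLeadWord_precT_antiComm hchar es hba, p, q, rfl⟩

/-- Let `I ⊆ E(V)` be a homogeneous ideal generated in degrees `≥ 2`
and `J = π⁻¹(I)`.  Then `J` has a finite Gröbner basis with respect to `≺_t`. -/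
theorem preimage_has_finite_GB (K : Type) [Field K] (hchar : (2 : K) ≠ 0)
    (n : ℕ) (hn : 1 ≤ n)
    (es : (Fin n →₀ ℕ) → (Fin n →₀ ℕ) → Prop) (hes : IsCommMonoidWellOrder n es)
    (I : TwoSidedIdeal (EV K n)) (hI : IsHomogGenInDegGE2 I)
    (J : TwoSidedIdeal (FA K n)) (hJ : ∀ x, x ∈ J ↔ piE K n x ∈ I) :
    ∃ G : Finset (FA K n), IsGB (precT es) J (↑G : Set (FA K n)) :=
  preimage_has_finite_GB_general K hchar n es I J hJ
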